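/- arXiv:cmp-lg/9705006 — 5 statements merged into one kernel-verified Lean document; each statement's English description precedes it below -/
import Mathlib

section
/- Let F be a finite set of real numbers with F ⊆ (0,1] and let ε be a real number with ε > 0. Then the set of real numbers x such that x ≥ ε and x equals the product of some finite list of elements of F (the empty list having product 1) is finite. -/
/-!
Entries equal to `1` do not change a product, so one may delete them. The remaining entries lie
in the finite set `F ∩ (0,1)`, hence are all at most some `c < 1`, and a product of `n` of them
is at most `c ^ n`. A product `≥ ε` therefore has at most `N` factors `≠ 1`, where `c ^ N < ε`,
and there are only finitely many such products.
-/

lemma Finset.exists_between_forall_le {α : Type*} [LinearOrder α] (s : Finset α) {a b : α}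
    (hab : a < b) (hs : ∀ y ∈ s, y < b) : ∃ c, a ≤ c ∧ c < b ∧ ∀ y ∈ s, y ≤ c :=
  ⟨(insert a s).max' (insert_nonempty a s),
    le_max' _ _ (mem_insert_self a s),
    (max'_lt_iff _ _).2 fun _ hy => (mem_insert.1 hy).elim (· ▸ hab) (hs _),
    fun _ hy => le_max' _ _ (mem_insert_of_mem hy)⟩

lemma List.prod_le_pow_length_of_le {R : Type*} [CommMonoidWithZero R] [PartialOrder R]
    [ZeroLEOneClass R] [PosMulMono R] {l : List R} {c : R} (hl : ∀ y ∈ l, 0 ≤ y ∧ y ≤ c) :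
    l.prod ≤ c ^ l.length := by
  simpa [map_const', prod_replicate] using
    prod_map_le_prod_map₀ id (Function.const R c) (fun y hy => (hl y hy).1) (fun y hy => (hl y hy).2)

lemma Set.Finite.setOf_list_prod_of_length_le {M : Type*} [Monoid M] {S : Set M}
    (hS : S.Finite) (N : ℕ) :
    {x : M | ∃ l : List M, (∀ y ∈ l, y ∈ S) ∧ l.length ≤ N ∧ x = l.prod}.Finite := by
  have : Finite S := hS
  refine ((List.finite_length_le S N).image fun l => (l.map (↑)).prod).subset ?_
  rintro x ⟨l, hlS, hlN, rfl⟩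
  lift l to List S using hlS
  exact ⟨l, by simpa using hlN, rfl⟩

/-- Only finitely many products of finite lists of elements of a finite set
`F ⊆ (0,1]` lie above a positive threshold `ε`. -/
theorem stmt_0 (F : Finset ℝ) (hF : ∀ x ∈ F, 0 < x ∧ x ≤ 1) (ε : ℝ) (hε : 0 < ε) :
    {x : ℝ | ε ≤ x ∧ ∃ l : List ℝ, (∀ y ∈ l, y ∈ F) ∧ x = l.prod}.Finite := by
  obtain ⟨c, hc0, hc1, hFc⟩ := (F.filter (· < 1)).exists_between_forall_le zero_lt_one
    fun y hy => (Finset.mem_filter.1 hy).2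
  obtain ⟨N, hN⟩ := exists_pow_lt_of_lt_one hε hc1
  refine (F.finite_toSet.setOf_list_prod_of_length_le N).subset ?_
  rintro _ ⟨hεx, l, hlF, rfl⟩
  set l' := l.filter (· != 1)
  have hl'F : ∀ y ∈ l', y ∈ F := fun y hy => hlF y (List.mem_of_mem_filter hy)
  have hl'c : ∀ y ∈ l', 0 ≤ y ∧ y ≤ c := fun y hy => by
    have hy1 : y ≠ 1 := by simpa using (List.mem_filter.1 hy).2
    have hyF := hF y (hl'F y hy)
    exact ⟨hyF.1.le, hFc y (Finset.mem_filter.2 ⟨hl'F y hy, lt_of_le_of_ne hyF.2 hy1⟩)⟩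
  refine ⟨l', hl'F, ?_, (List.prod_filter_bne_one l).symm⟩
  by_contra! hlen
  have : l.prod < ε := calc
    l.prod = l'.prod := (List.prod_filter_bne_one l).symm
    _ ≤ c ^ l'.length := List.prod_le_pow_length_of_le hl'c
    _ ≤ c ^ N := pow_le_pow_of_le_one hc0 hc1.le hlen.le
    _ < ε := hN
  exact this.not_ge hεx
end

section
/- Let F be a finite set of real numbers with F ⊆ (0,1] and let S be a nonempty set of real numbers such that every element of S is either 0 or equals the product of some finite list of elements of F. Then S has a greatest element: there exists m ∈ S with x ≤ m for all x ∈ S; in particular the supremum of S is attained. -/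
/-!
Fix a positive element `p` of `S` (if there is none, `S = {0}`). Choose `N` with `a ^ N < p` for
every `a ∈ F` with `a < 1`. A product of factors from `F` that is at least `p` contains each such
`a` fewer than `N` times, so it is one of the finitely many numbers `∏ a, a ^ e a` with `e a < N`.
Hence `S ∩ [p, ∞)` is finite and its maximum is the greatest element of `S`.
-/

open Set Filter

theorem List.prod_le_pow_count {R : Type*} [CommSemiring R] [PartialOrder R] [IsOrderedRing R]
    [DecidableEq R] {l : List R} (hl : ∀ y ∈ l, 0 ≤ y ∧ y ≤ 1) (a : R) :
    l.prod ≤ a ^ l.count a := by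
  induction l with
  | nil => simp
  | cons b t ih =>
    obtain ⟨⟨hb₀, hb₁⟩, ht⟩ := List.forall_mem_cons.mp hl
    have ht₀ : 0 ≤ t.prod := List.prod_nonneg fun y hy => (ht y hy).1
    rw [List.prod_cons]
    by_cases hab : b = a
    · subst hab
      rw [List.count_cons_self, pow_succ']
      exact mul_le_mul_of_nonneg_left (ih ht) hb₀
    · rw [List.count_cons_of_ne hab]
      exact (mul_le_of_le_one_left ht₀ hb₁).trans (ih ht)

theorem List.count_lt_of_pow_lt_le_prod {R : Type*} [CommSemiring R] [LinearOrder R]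
    [IsOrderedRing R] [DecidableEq R] {l : List R} (hl : ∀ y ∈ l, 0 ≤ y ∧ y ≤ 1)
    {a p : R} {N : ℕ} (hpow : a ^ N < p) (hprod : p ≤ l.prod) (ha₀ : 0 ≤ a) (ha₁ : a ≤ 1) :
    l.count a < N := by
  by_contra! hN
  exact (hprod.trans (l.prod_le_pow_count hl a)).not_gt
    (lt_of_le_of_lt (pow_le_pow_of_le_one ha₀ ha₁ hN) hpow)

theorem finite_setOf_le_listProd {F : Finset ℝ} (hF : ∀ x ∈ F, 0 ≤ x ∧ x ≤ 1) {p : ℝ}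
    (hp : 0 < p) : {x | p ≤ x ∧ ∃ l : List ℝ, (∀ y ∈ l, y ∈ F) ∧ x = l.prod}.Finite := by
  classical
  obtain ⟨N, hN⟩ : ∃ N : ℕ, ∀ a ∈ F, a < 1 → a ^ N < p := by
    refine (eventually_all_finset (l := atTop) F).mpr (fun a ha => ?_) |>.exists
    by_cases ha₁ : a < 1
    · filter_upwards [(tendsto_pow_atTop_nhds_zero_of_lt_one (hF a ha).1 ha₁).eventually
        (gt_mem_nhds hp)] with n hn using fun _ => hn
    · exact .of_forall fun _ h => absurd h ha₁
  set F' := F.filter (· < 1)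
  refine (finite_range fun e : F' → Fin N => ∏ a : F', (a : ℝ) ^ (e a : ℕ)).subset ?_
  rintro x ⟨hpx, l, hl, rfl⟩
  have hl' : ∀ y ∈ l, 0 ≤ y ∧ y ≤ 1 := fun y hy => hF y (hl y hy)
  have hcount (a : F') : l.count (a : ℝ) < N := by
    obtain ⟨ha, ha₁⟩ := Finset.mem_filter.mp a.2
    exact l.count_lt_of_pow_lt_le_prod hl' (hN a ha ha₁) hpx (hF a ha).1 ha₁.le
  refine ⟨fun a => ⟨l.count (a : ℝ), hcount a⟩, ?_⟩
  rw [Finset.prod_list_count_of_subset l F fun y hy => hl y (List.mem_toFinset.mp hy),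
    ← Finset.prod_filter_of_ne (p := (· < 1)), ← Finset.prod_coe_sort]
  intro a ha hne
  exact lt_of_le_of_ne (hF a ha).2 fun h => hne (by rw [h, one_pow])

theorem Set.exists_isGreatest_of_finite_inter_Ici {α : Type*} [LinearOrder α] {S : Set α} {p : α}
    (hp : p ∈ S) (hfin : (S ∩ Ici p).Finite) : ∃ m, IsGreatest S m := by
  obtain ⟨m, ⟨hmS, hpm⟩, hm⟩ := exists_max_image _ id hfin ⟨p, hp, self_mem_Ici⟩
  refine ⟨m, hmS, fun x hx => ?_⟩
  rcases le_total p x with hpx | hxp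
  · exact hm x ⟨hx, hpx⟩
  · exact hxp.trans hpm

/-- A nonempty set of reals, each of which is 0 or a product of a finite list
of elements of a finite set `F ⊆ (0,1]`, has a greatest element; in particular
its supremum is attained. -/
theorem stmt_1 (F : Finset ℝ) (hF : ∀ x ∈ F, 0 < x ∧ x ≤ 1) (S : Set ℝ)
    (hS : S.Nonempty)
    (hprod : ∀ x ∈ S, x = 0 ∨ ∃ l : List ℝ, (∀ y ∈ l, y ∈ F) ∧ x = l.prod) :
    ∃ m ∈ S, (∀ x ∈ S, x ≤ m) ∧ sSup S = m := by
  suffices ∃ m, IsGreatest S m from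
    let ⟨m, hm⟩ := this; ⟨m, hm.1, hm.2, hm.csSup_eq⟩
  by_cases hpos : ∃ p ∈ S, 0 < p
  · obtain ⟨p, hpS, hp⟩ := hpos
    refine exists_isGreatest_of_finite_inter_Ici hpS <|
      (finite_setOf_le_listProd (fun x hx => ⟨(hF x hx).1.le, (hF x hx).2⟩) hp).subset ?_
    rintro x ⟨hxS, hpx⟩
    refine ⟨hpx, (hprod x hxS).resolve_left ?_⟩
    rintro rfl
    exact hp.not_ge hpx
  · push Not at hpos
    have hzero : S = {0} := by
      refine hS.subset_singleton_iff.mp fun x hx => ?_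
      rcases hprod x hx with h | ⟨l, hl, rfl⟩
      · exact h
      · exact absurd (hpos _ hx) (List.prod_pos fun y hy => (hF y (hl y hy)).1).not_ge
    exact ⟨0, hzero ▸ isGreatest_singleton⟩
end

section
/- For every quantitative definite clause program P, every i ∈ ℕ and every atom a, the chain value A_i a is either 0 or equals the product of some finite list of factors of clauses of P. -/
/-! Since `P` is finite, the supremum defining `A_{i+1} a` is either over the empty set or
attained by a clause `(a, body, f)`, and the minimum over `body` is either `1` or `A_i b` for an
atom `b` of the body. So `A_{i+1} a` is `0`, `f`, or `f * A_i b`, and induction on `i` puts every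
nonzero chain value in the submonoid of `ℝ` generated by the factors. -/

/-- A quantitative definite clause: a head atom, a list of body atoms,
and a numerical factor. -/
structure QClause (α : Type*) where
  head : α
  body : List α
  factor : ℝ

variable {α : Type*}

/-- The minimum of the values of an interpretation over a list of atoms,
with the empty list yielding 1. -/
def bodyMin (I : α → ℝ) (l : List α) : ℝ := (l.map I).foldr min 1

/-- A quantitative definite clause program: a finite set of clauses whose
factors lie in (0,1]. -/
def QProgram (P : Set (QClause α)) : Prop :=
  P.Finite ∧ ∀ c ∈ P, 0 < c.factor ∧ c.factor ≤ 1

/-- An interpretation assigns to each atom a value in [0,1]. -/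
def IsInterp (I : α → ℝ) : Prop := ∀ a, 0 ≤ I a ∧ I a ≤ 1

/-- An interpretation is a model of `P` iff it is an interpretation and for
every clause `(h, [b₁,…,b_k], f)` of `P`, `I h ≥ f * min {I b₁, …, I b_k}`. -/
def IsModel (P : Set (QClause α)) (I : α → ℝ) : Prop :=
  IsInterp I ∧ ∀ c ∈ P, c.factor * bodyMin I c.body ≤ I c.head

/-- The `P`-chain: `A₀ a = 0` and
`A_{i+1} a = sup { f * min {A_i b₁, …, A_i b_k} : (a,[b₁,…,b_k],f) ∈ P }`
(in ℝ, `sSup ∅ = 0`). -/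
noncomputable def chain (P : Set (QClause α)) : ℕ → α → ℝ
  | 0, _ => 0
  | i + 1, a =>
      sSup {x | ∃ c ∈ P, c.head = a ∧ x = c.factor * bodyMin (chain P i) c.body}

theorem List.foldr_min_eq_or_mem {β : Type*} [LinearOrder β] (l : List β) (b : β) :
    l.foldr min b = b ∨ l.foldr min b ∈ l := by
  induction l with
  | nil => exact .inl rfl
  | cons x xs ih =>
    rw [List.foldr_cons, List.mem_cons]
    rcases min_choice x (xs.foldr min b) with h | h <;> rw [h]
    · exact .inr (.inl rfl)
    · exact ih.imp_right .inr

theorem bodyMin_eq_one_or_exists_mem (I : α → ℝ) (l : List α) :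
    bodyMin I l = 1 ∨ ∃ b ∈ l, bodyMin I l = I b := by
  refine (List.foldr_min_eq_or_mem (l.map I) 1).imp_right fun h => ?_
  obtain ⟨b, hb, hIb⟩ := List.mem_map.mp h
  exact ⟨b, hb, hIb.symm⟩

theorem Real.sSup_eq_zero_or_mem_of_finite {s : Set ℝ} (hs : s.Finite) :
    sSup s = 0 ∨ sSup s ∈ s := by
  rcases s.eq_empty_or_nonempty with rfl | hne
  · exact .inl Real.sSup_empty
  · exact .inr (hne.csSup_mem hs)

theorem chain_succ_eq_zero_or_exists {P : Set (QClause α)} (hP : P.Finite) (i : ℕ) (a : α) :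
    chain P (i + 1) a = 0 ∨
      ∃ c ∈ P, chain P (i + 1) a = c.factor * bodyMin (chain P i) c.body := by
  have hfin : {x | ∃ c ∈ P, c.head = a ∧ x = c.factor * bodyMin (chain P i) c.body}.Finite :=
    (hP.image fun c => c.factor * bodyMin (chain P i) c.body).subset
      fun x ⟨c, hc, _, hx⟩ => ⟨c, hc, hx.symm⟩
  exact (Real.sSup_eq_zero_or_mem_of_finite hfin).imp id fun ⟨c, hc, _, hx⟩ => ⟨c, hc, hx⟩

theorem chain_eq_zero_or_mem_closure {P : Set (QClause α)} (hP : P.Finite) (i : ℕ) (a : α) :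
    chain P i a = 0 ∨ chain P i a ∈ Submonoid.closure (QClause.factor '' P) := by
  induction i generalizing a with
  | zero => exact .inl rfl
  | succ i ih =>
    obtain h0 | ⟨c, hc, hca⟩ := chain_succ_eq_zero_or_exists hP i a
    · exact .inl h0
    have hf : c.factor ∈ Submonoid.closure (QClause.factor '' P) :=
      Submonoid.subset_closure ⟨c, hc, rfl⟩
    rw [hca]
    obtain h1 | ⟨b, -, hb⟩ := bodyMin_eq_one_or_exists_mem (chain P i) c.body
    · exact .inr (by rwa [h1, mul_one])
    · rw [hb]
      obtain h0 | hmem := ih b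
      · exact .inl (by rw [h0, mul_zero])
      · exact .inr (mul_mem hf hmem)

/-- Every chain value is either 0 or a product of a finite list of factors of
clauses of `P`. -/
theorem stmt_2 (P : Set (QClause α)) (hP : QProgram P) (i : ℕ) (a : α) :
    chain P i a = 0 ∨
      ∃ l : List ℝ, (∀ f ∈ l, ∃ c ∈ P, c.factor = f) ∧ chain P i a = l.prod :=
  (chain_eq_zero_or_mem_closure hP.1 i a).imp_right fun h =>
    let ⟨l, hl, hprod⟩ := Submonoid.exists_list_of_mem_closure h
    ⟨l, hl, hprod.symm⟩
end

section
/- For every quantitative definite clause program P, the pointwise supremum A of the P-chain, defined by A a = sup{A_i a : i ∈ ℕ}, is an interpretation (i.e., 0 ≤ A a ≤ 1 for all atoms a) and is a model of P. -/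
variable {α : Type*}

lemma bodyMin_le_one (I : α → ℝ) (l : List α) : bodyMin I l ≤ 1 := by
  induction l with
  | nil => simp [bodyMin]
  | cons a t ih => simpa [bodyMin] using Or.inr ih

lemma bodyMin_nonneg {I : α → ℝ} (h : ∀ a, 0 ≤ I a) (l : List α) : 0 ≤ bodyMin I l := by
  induction l with
  | nil => simp [bodyMin]
  | cons a t ih => simpa [bodyMin] using ⟨h a, ih⟩

lemma bodyMin_mono {I J : α → ℝ} (h : ∀ a, I a ≤ J a) (l : List α) :
    bodyMin I l ≤ bodyMin J l := by
  induction l with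
  | nil => simp [bodyMin]
  | cons a t ih =>
      simp only [bodyMin, List.map_cons, List.foldr_cons] at *
      exact min_le_min (h a) ih

lemma chain_bounds (P : Set (QClause α)) (hP : QProgram P) :
    ∀ i a, 0 ≤ chain P i a ∧ chain P i a ≤ 1 := by
  intro i
  induction i with
  | zero => intro a; simp [chain]
  | succ i ih =>
      intro a
      constructor
      · exact Real.sSup_nonneg (by
          rintro x ⟨c, hc, -, rfl⟩
          exact mul_nonneg (hP.2 c hc).1.le (bodyMin_nonneg (fun b => (ih b).1) _))
      · exact Real.sSup_le (by
          rintro x ⟨c, hc, -, rfl⟩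
          exact mul_le_one₀ (hP.2 c hc).2
            (bodyMin_nonneg (fun b => (ih b).1) _) (bodyMin_le_one _ _)) zero_le_one

lemma chain_set_bdd (P : Set (QClause α)) (hP : QProgram P) (i : ℕ) (a : α) :
    BddAbove {x | ∃ c ∈ P, c.head = a ∧ x = c.factor * bodyMin (chain P i) c.body} := by
  refine ⟨1, ?_⟩
  rintro x ⟨c, hc, -, rfl⟩
  exact mul_le_one₀ (hP.2 c hc).2
    (bodyMin_nonneg (fun b => (chain_bounds P hP i b).1) _) (bodyMin_le_one _ _)

lemma chain_mono (P : Set (QClause α)) (hP : QProgram P) :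
    ∀ i a, chain P i a ≤ chain P (i + 1) a := by
  intro i
  induction i with
  | zero => intro a; exact (chain_bounds P hP 1 a).1
  | succ i ih =>
      intro a
      apply Real.sSup_le _ (chain_bounds P hP (i + 2) a).1
      rintro x ⟨c, hc, hh, rfl⟩
      calc c.factor * bodyMin (chain P i) c.body
          ≤ c.factor * bodyMin (chain P (i + 1)) c.body :=
            mul_le_mul_of_nonneg_left (bodyMin_mono ih _) (hP.2 c hc).1.le
        _ ≤ chain P (i + 2) a := le_csSup (chain_set_bdd P hP (i + 1) a) ⟨c, hc, hh, rfl⟩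

lemma chain_range_bdd (P : Set (QClause α)) (hP : QProgram P) (a : α) :
    BddAbove (Set.range fun i => chain P i a) := by
  refine ⟨1, ?_⟩
  rintro x ⟨i, rfl⟩
  exact (chain_bounds P hP i a).2

lemma min_ciSup_le {u v : ℕ → ℝ} (hu : Monotone u) (hv : Monotone v)
    (hub : BddAbove (Set.range u)) (hvb : BddAbove (Set.range v)) :
    min (⨆ i, u i) (⨆ i, v i) ≤ ⨆ i, min (u i) (v i) := by
  have hb : BddAbove (Set.range fun i => min (u i) (v i)) := by
    obtain ⟨M, hM⟩ := hub
    refine ⟨M, ?_⟩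
    rintro x ⟨i, rfl⟩
    exact le_trans (min_le_left _ _) (hM ⟨i, rfl⟩)
  apply le_of_forall_pos_le_add
  intro ε hε
  obtain ⟨j, hj⟩ := exists_lt_of_lt_ciSup
    (show min (⨆ i, u i) (⨆ i, v i) - ε < ⨆ i, u i from
      lt_of_lt_of_le (sub_lt_self _ hε) (min_le_left _ _))
  obtain ⟨k, hk⟩ := exists_lt_of_lt_ciSup
    (show min (⨆ i, u i) (⨆ i, v i) - ε < ⨆ i, v i from
      lt_of_lt_of_le (sub_lt_self _ hε) (min_le_right _ _))
  have h1 : min (⨆ i, u i) (⨆ i, v i) - ε ≤ min (u (max j k)) (v (max j k)) :=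
    le_min (le_trans hj.le (hu (le_max_left _ _)))
      (le_trans hk.le (hv (le_max_right _ _)))
  have h2 : min (u (max j k)) (v (max j k)) ≤ ⨆ i, min (u i) (v i) :=
    le_ciSup hb (max j k)
  linarith

lemma bodyMin_iSup_le (P : Set (QClause α)) (hP : QProgram P) (l : List α) :
    bodyMin (fun a => ⨆ i : ℕ, chain P i a) l ≤ ⨆ i : ℕ, bodyMin (chain P i) l := by
  induction l with
  | nil =>
      simp only [bodyMin, List.map_nil, List.foldr_nil]
      exact le_of_eq (ciSup_const).symm
  | cons a t ih =>
      have hmb : BddAbove (Set.range fun i => bodyMin (chain P i) t) := by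
        refine ⟨1, ?_⟩
        rintro x ⟨i, rfl⟩
        exact bodyMin_le_one _ _
      have hmono : Monotone fun i => bodyMin (chain P i) t := by
        apply monotone_nat_of_le_succ
        intro i
        exact bodyMin_mono (chain_mono P hP i) t
      have humono : Monotone fun i => chain P i a :=
        monotone_nat_of_le_succ (fun i => chain_mono P hP i a)
      calc bodyMin (fun a => ⨆ i : ℕ, chain P i a) (a :: t)
          = min (⨆ i : ℕ, chain P i a) (bodyMin (fun a => ⨆ i : ℕ, chain P i a) t) := rfl
        _ ≤ min (⨆ i : ℕ, chain P i a) (⨆ i : ℕ, bodyMin (chain P i) t) :=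
            min_le_min le_rfl ih
        _ ≤ ⨆ i : ℕ, min (chain P i a) (bodyMin (chain P i) t) :=
            min_ciSup_le humono hmono (chain_range_bdd P hP a) hmb
        _ = ⨆ i : ℕ, bodyMin (chain P i) (a :: t) := rfl

/-- The pointwise supremum of the `P`-chain is an interpretation and a model
of `P`. -/
theorem stmt_5 (P : Set (QClause α)) (hP : QProgram P) :
    IsInterp (fun a => ⨆ i : ℕ, chain P i a) ∧
      IsModel P (fun a => ⨆ i : ℕ, chain P i a) := by
  have hinterp : IsInterp (fun a => ⨆ i : ℕ, chain P i a) := by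
    intro a
    constructor
    · have := le_ciSup (chain_range_bdd P hP a) 0
      simpa [chain] using this
    · exact ciSup_le fun i => (chain_bounds P hP i a).2
  refine ⟨hinterp, hinterp, ?_⟩
  intro c hc
  have hf := (hP.2 c hc).1
  calc c.factor * bodyMin (fun a => ⨆ i : ℕ, chain P i a) c.body
      ≤ c.factor * ⨆ i : ℕ, bodyMin (chain P i) c.body :=
        mul_le_mul_of_nonneg_left (bodyMin_iSup_le P hP c.body) hf.le
    _ = ⨆ i : ℕ, c.factor * bodyMin (chain P i) c.body :=
        Real.mul_iSup_of_nonneg hf.le _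
    _ ≤ ⨆ i : ℕ, chain P i c.head := by
        apply ciSup_le
        intro i
        calc c.factor * bodyMin (chain P i) c.body
            ≤ chain P (i + 1) c.head :=
              le_csSup (chain_set_bdd P hP i c.head) ⟨c, hc, rfl, rfl⟩
          _ ≤ ⨆ i : ℕ, chain P i c.head := le_ciSup (chain_range_bdd P hP c.head) (i + 1)
end

section
/- Soundness of quantitative deduction: for every quantitative definite clause program P, every atom a and every real v, if Derives P a v holds then B a ≥ v for every model B of P. -/
variable {α : Type*}

/-- Derivability (proof trees): `Derives P a v` holds iff there is a clause
`(a, [b₁,…,b_k], f) ∈ P` and values `v₁,…,v_k` with `Derives P bⱼ vⱼ` for each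
`j` and `v = f * min {v₁, …, v_k}` (min over an empty list is 1). -/
inductive Derives (P : Set (QClause α)) : α → ℝ → Prop where
  | step (c : QClause α) (hc : c ∈ P) (vs : List ℝ) (hlen : vs.length = c.body.length)
      (hbody : ∀ i : ℕ, ∀ hb : i < c.body.length, ∀ hv : i < vs.length,
        Derives P (c.body.get ⟨i, hb⟩) (vs.get ⟨i, hv⟩)) :
      Derives P c.head (c.factor * vs.foldr min 1)

lemma foldr_min_le_foldr_min (vs ws : List ℝ) (hlen : vs.length = ws.length)
    (h : ∀ i : ℕ, ∀ hv : i < vs.length, ∀ hw : i < ws.length,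
      vs.get ⟨i, hv⟩ ≤ ws.get ⟨i, hw⟩) :
    vs.foldr min 1 ≤ ws.foldr min 1 := by
  induction vs generalizing ws with
  | nil => cases ws with
    | nil => simp
    | cons w ws => simp at hlen
  | cons v vs ih =>
    cases ws with
    | nil => simp at hlen
    | cons w ws =>
      simp only [List.foldr_cons]
      have h0 := h 0 (by simp) (by simp)
      simp at h0
      have := ih ws (by simpa using hlen) (fun i hv hw => h (i+1) (by simpa using hv) (by simpa using hw))
      exact min_le_min h0 this

/-- Soundness: anything derivable at value `v` holds at value at least `v` in
every model of `P`. -/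
theorem stmt_9 (P : Set (QClause α)) (hP : QProgram P) (a : α) (v : ℝ)
    (hd : Derives P a v) : ∀ B : α → ℝ, IsModel P B → v ≤ B a := by
  induction hd with
  | step c hc vs hlen hbody ih =>
    intro B hB
    have hfac := (hP.2 c hc).1
    have key : vs.foldr min 1 ≤ bodyMin B c.body := by
      unfold bodyMin
      apply foldr_min_le_foldr_min
      · simpa using hlen
      · intro i hv hw
        have hw' : i < c.body.length := by simpa using hw
        have := ih i hw' hv B hB
        simpa using this
    calc c.factor * vs.foldr min 1 ≤ c.factor * bodyMin B c.body :=
          mul_le_mul_of_nonneg_left key hfac.le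
      _ ≤ B c.head := hB.2 c hc
end
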